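/- Exact expected value of the Gaussian-smoothed χ² divergence of the empirical measure: Let μ be a Borel probability measure on ℝ^d, σ > 0, and for each n ≥ 1 let X_1,…,X_n be i.i.d. with law μ and μ̂_n the empirical measure. Then E[χ²(μ̂_n*γ_σ ‖ μ*γ_σ)] = (1/n)·∫_{ℝ^d} Var_μ(φ_σ(x−·))/(μ*φ_σ)(x) dx (both sides possibly +∞). In particular, if ∫_{ℝ^d} Var_μ(φ_σ(x−·))/(μ*φ_σ)(x) dx = ∞, then E[χ²(μ̂_n*γ_σ ‖ μ*γ_σ)] = ∞ for every n ∈ ℕ. -/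

import Mathlib

/-!
At a fixed point `x`, the smoothed empirical density `(μ̂ₙ*φ_σ)(x)` is the sample mean of `n`
i.i.d. copies of the bounded variable `φ_σ(x − X)`, whose mean is `s = (μ*φ_σ)(x)`. The χ²
integrand at `x` equals `((μ̂ₙ*φ_σ)(x) − s)² / s`, so its expectation is the variance of that
sample mean, `Var_μ(φ_σ(x−·)) / n`, divided by `s`. Tonelli's theorem then exchanges the
expectation with the integral over `x`.
-/
open MeasureTheory ProbabilityTheory
open scoped ENNReal

section SampleMean

variable {E : Type*} [MeasurableSpace E] {μ : Measure E} [IsProbabilityMeasure μ] {f : E → ℝ}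
  {n : ℕ}

lemma memLp_sampleMean (hf : MemLp f 2 μ) :
    MemLp (fun xs : Fin n → E => (n : ℝ)⁻¹ * ∑ i, f (xs i)) 2 (Measure.pi fun _ => μ) :=
  (memLp_finsetSum _ fun i _ => hf.comp_measurePreserving (measurePreserving_eval _ i)).const_mul _

lemma integral_sampleMean (hf : Integrable f μ) (hn : n ≠ 0) :
    ∫ xs : Fin n → E, (n : ℝ)⁻¹ * ∑ i, f (xs i) ∂(Measure.pi fun _ => μ) = ∫ y, f y ∂μ := by
  have hcoord (i : Fin n) : ∫ xs : Fin n → E, f (xs i) ∂(Measure.pi fun _ => μ) = ∫ y, f y ∂μ :=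
    integral_comp_eval hf.aestronglyMeasurable
  rw [integral_const_mul, integral_finsetSum (f := fun i (xs : Fin n → E) => f (xs i)) _ fun i _ =>
    (measurePreserving_eval _ i).integrable_comp_of_integrable hf]
  simp [hcoord, hn]

lemma variance_sampleMean (hf : MemLp f 2 μ) :
    Var[fun xs : Fin n → E => (n : ℝ)⁻¹ * ∑ i, f (xs i); Measure.pi fun _ => μ]
      = Var[f; μ] / n := by
  have hsum := variance_sum_pi (μ := fun _ : Fin n => μ) (X := fun _ => f) fun _ => hf
  simp only [Finset.sum_fn, Finset.sum_const, Finset.card_univ, Fintype.card_fin,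
    nsmul_eq_mul] at hsum
  rw [variance_const_mul, hsum]
  field_simp

lemma lintegral_ofReal_sq_sampleMean_sub (hf : MemLp f 2 μ) (hn : n ≠ 0) :
    ∫⁻ xs : Fin n → E, ENNReal.ofReal (((n : ℝ)⁻¹ * ∑ i, f (xs i) - μ[f]) ^ 2)
        ∂(Measure.pi fun _ => μ) = ENNReal.ofReal (Var[f; μ] / n) := by
  rw [← variance_sampleMean hf, ofReal_variance (memLp_sampleMean hf),
    evariance_eq_lintegral_ofReal, integral_sampleMean (hf.integrable one_le_two) hn]

-- At `s = 0` both sides vanish, by the junk value `a / 0 = 0`.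
lemma sq_div_sub_one_mul_self (a s : ℝ) : (a / s - 1) ^ 2 * s = (a - s) ^ 2 * s⁻¹ := by
  rcases eq_or_ne s 0 with rfl | hs
  · simp
  · field_simp

lemma lintegral_chisq_sampleMean (hf : MemLp f 2 μ) (hn : n ≠ 0) :
    ∫⁻ xs : Fin n → E, ENNReal.ofReal ((((n : ℝ)⁻¹ * ∑ i, f (xs i)) / μ[f] - 1) ^ 2 * μ[f])
        ∂(Measure.pi fun _ => μ)
      = (n : ℝ≥0∞)⁻¹ * ENNReal.ofReal (Var[f; μ] / μ[f]) := by
  simp_rw [sq_div_sub_one_mul_self, ENNReal.ofReal_mul (sq_nonneg _)]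
  rw [lintegral_mul_const' _ _ ENNReal.ofReal_ne_top, lintegral_ofReal_sq_sampleMean_sub hf hn,
    div_eq_mul_inv, div_eq_mul_inv, ENNReal.ofReal_mul (variance_nonneg _ _),
    ENNReal.ofReal_mul (variance_nonneg _ _), ENNReal.ofReal_inv_of_pos (by positivity),
    ENNReal.ofReal_natCast]
  ring

end SampleMean

noncomputable section

/-- The density of the centered isotropic Gaussian `N(0, σ² I_d)` on `ℝ^d`. -/
def gaussDensity (d : ℕ) (σ : ℝ) (x : EuclideanSpace ℝ (Fin d)) : ℝ :=
  (2 * Real.pi * σ ^ 2) ^ (-(d : ℝ) / 2) * Real.exp (-‖x‖ ^ 2 / (2 * σ ^ 2))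

/-- The Lebesgue density of `μ * γ_σ`: `(μ*φ_σ)(x) = ∫ φ_σ(x−y) dμ(y)`. -/
def smoothDensity (d : ℕ) (σ : ℝ) (μ : Measure (EuclideanSpace ℝ (Fin d)))
    (x : EuclideanSpace ℝ (Fin d)) : ℝ :=
  ∫ y, gaussDensity d σ (x - y) ∂μ

/-- The Lebesgue density of `μ̂ₙ * γ_σ`, the smoothed empirical measure of the
sample `xs : Fin n → ℝ^d`. -/
def empSmoothDensity (d : ℕ) (σ : ℝ) {n : ℕ} (xs : Fin n → EuclideanSpace ℝ (Fin d))
    (x : EuclideanSpace ℝ (Fin d)) : ℝ :=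
  (n : ℝ)⁻¹ * ∑ i, gaussDensity d σ (x - xs i)

/-- `Var_μ(φ_σ(x−·))`, the variance of `φ_σ(x−X)` for `X ∼ μ`. -/
def smoothVar (d : ℕ) (σ : ℝ) (μ : Measure (EuclideanSpace ℝ (Fin d)))
    (x : EuclideanSpace ℝ (Fin d)) : ℝ :=
  ∫ y, (gaussDensity d σ (x - y) - smoothDensity d σ μ x) ^ 2 ∂μ

section Gaussian

variable {d : ℕ} {σ : ℝ}

@[fun_prop]
lemma continuous_gaussDensity : Continuous (gaussDensity d σ) := by
  unfold gaussDensity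
  fun_prop

lemma abs_gaussDensity_le (x : EuclideanSpace ℝ (Fin d)) :
    |gaussDensity d σ x| ≤ |(2 * Real.pi * σ ^ 2) ^ (-(d : ℝ) / 2)| := by
  rw [gaussDensity, abs_mul, Real.abs_exp]
  refine mul_le_of_le_one_right (abs_nonneg _) (Real.exp_le_one_iff.2 ?_)
  exact div_nonpos_of_nonpos_of_nonneg (neg_nonpos.2 (sq_nonneg _)) (by positivity)

lemma memLp_gaussDensity_sub (μ : Measure (EuclideanSpace ℝ (Fin d))) [IsFiniteMeasure μ]
    (p : ℝ≥0∞) (x : EuclideanSpace ℝ (Fin d)) :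
    MemLp (fun y => gaussDensity d σ (x - y)) p μ :=
  MemLp.of_bound (by fun_prop) _ (ae_of_all _ fun y => abs_gaussDensity_le (x - y))

lemma measurable_smoothDensity (μ : Measure (EuclideanSpace ℝ (Fin d))) [SFinite μ] :
    Measurable (smoothDensity d σ μ) :=
  (continuous_gaussDensity.comp (continuous_fst.sub continuous_snd)).stronglyMeasurable
    |>.integral_prod_right' |>.measurable

lemma continuous_empSmoothDensity (n : ℕ) :
    Continuous fun p : (Fin n → EuclideanSpace ℝ (Fin d)) × EuclideanSpace ℝ (Fin d) =>
      empSmoothDensity d σ p.1 p.2 := by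
  unfold empSmoothDensity
  fun_prop

lemma smoothVar_eq_variance (μ : Measure (EuclideanSpace ℝ (Fin d)))
    (x : EuclideanSpace ℝ (Fin d)) :
    smoothVar d σ μ x = Var[fun y => gaussDensity d σ (x - y); μ] :=
  (variance_eq_integral (by fun_prop)).symm

lemma lintegral_chisq_empSmoothDensity (μ : Measure (EuclideanSpace ℝ (Fin d)))
    [IsProbabilityMeasure μ] {n : ℕ} (hn : n ≠ 0) :
    ∫⁻ xs, (∫⁻ x, ENNReal.ofReal
        ((empSmoothDensity d σ xs x / smoothDensity d σ μ x - 1) ^ 2 * smoothDensity d σ μ x))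
      ∂(Measure.pi fun _ : Fin n => μ)
      = (n : ℝ≥0∞)⁻¹ * ∫⁻ x, ENNReal.ofReal (smoothVar d σ μ x / smoothDensity d σ μ x) := by
  have hmeas := measurable_smoothDensity (σ := σ) μ
  have hcont := continuous_empSmoothDensity (d := d) (σ := σ) n
  rw [lintegral_lintegral_swap (by fun_prop), ← lintegral_const_mul' _ _ (by simpa)]
  refine lintegral_congr fun x => ?_
  rw [smoothVar_eq_variance]
  exact (lintegral_chisq_sampleMean (n := n) (memLp_gaussDensity_sub μ 2 x) hn :)

end Gaussian

theorem expected_smoothed_chisq_general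
    (d : ℕ) (σ : ℝ)
    (μ : Measure (EuclideanSpace ℝ (Fin d))) [IsProbabilityMeasure μ] :
    (∀ n : ℕ, 1 ≤ n →
      ∫⁻ xs, (∫⁻ x, ENNReal.ofReal
          ((empSmoothDensity d σ xs x / smoothDensity d σ μ x - 1) ^ 2 *
            smoothDensity d σ μ x))
        ∂(Measure.pi fun _ : Fin n => μ)
      = (n : ℝ≥0∞)⁻¹ * ∫⁻ x, ENNReal.ofReal (smoothVar d σ μ x / smoothDensity d σ μ x))
    ∧
    ((∫⁻ x, ENNReal.ofReal (smoothVar d σ μ x / smoothDensity d σ μ x) = ⊤) →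
      ∀ n : ℕ, 1 ≤ n →
        ∫⁻ xs, (∫⁻ x, ENNReal.ofReal
            ((empSmoothDensity d σ xs x / smoothDensity d σ μ x - 1) ^ 2 *
              smoothDensity d σ μ x))
          ∂(Measure.pi fun _ : Fin n => μ) = ⊤) := by
  have expectation (n : ℕ) (hn : 1 ≤ n) :=
    lintegral_chisq_empSmoothDensity (σ := σ) μ (n := n) (by omega)
  refine ⟨expectation, fun h_top n hn => ?_⟩
  rw [expectation n hn, h_top, ENNReal.mul_top (by simp)]

/-- Exact expected value of the Gaussian-smoothed χ² divergence of the empirical measure: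
`E[χ²(μ̂ₙ*γ_σ‖μ*γ_σ)] = (1/n) ∫ Var_μ(φ_σ(x−·))/(μ*φ_σ)(x) dx` (both sides possibly `∞`);
in particular the expectation is infinite for every `n` when the integral diverges. -/
theorem expected_smoothed_chisq
    (d : ℕ) (σ : ℝ) (hσ : 0 < σ)
    (μ : Measure (EuclideanSpace ℝ (Fin d))) [IsProbabilityMeasure μ] :
    (∀ n : ℕ, 1 ≤ n →
      ∫⁻ xs, (∫⁻ x, ENNReal.ofReal
          ((empSmoothDensity d σ xs x / smoothDensity d σ μ x - 1) ^ 2 *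
            smoothDensity d σ μ x))
        ∂(Measure.pi fun _ : Fin n => μ)
      = (n : ℝ≥0∞)⁻¹ * ∫⁻ x, ENNReal.ofReal (smoothVar d σ μ x / smoothDensity d σ μ x))
    ∧
    ((∫⁻ x, ENNReal.ofReal (smoothVar d σ μ x / smoothDensity d σ μ x) = ⊤) →
      ∀ n : ℕ, 1 ≤ n →
        ∫⁻ xs, (∫⁻ x, ENNReal.ofReal
            ((empSmoothDensity d σ xs x / smoothDensity d σ μ x - 1) ^ 2 *
              smoothDensity d σ μ x))
          ∂(Measure.pi fun _ : Fin n => μ) = ⊤) :=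
  expected_smoothed_chisq_general d σ μ
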